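/- arXiv:1805.07945 — 6 statements merged into one kernel-verified Lean document; each statement's English description precedes it below -/
import Mathlib

section
/- Let T be a positivity-preserving linear operator on L^1(E, m), let p, q ∈ [1, ∞] with 1/p + 1/q = 1, and let f ∈ L^p(E, m), g ∈ L^q(E, m) be nonnegative. Then T[fg](x) ≤ (T[f^p](x))^(1/p) · (T[g^q](x))^(1/q) for m-almost every x ∈ E. -/
open MeasureTheory Filter Topology

/-!
Young's inequality with a weight `e^u` gives `f g ≤ e^{pu} f^p / p + e^{-qu} g^q / q` pointwise.
The right-hand side is a linear combination of `f^p` and `g^q`, so positivity and linearity of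
`T` carry the inequality over to `T[fg] ≤ e^{pu} T[f^p] / p + e^{-qu} T[g^q] / q` a.e.; for
countably many `u` (the rationals) this holds simultaneously off a null set. By continuity in `u`
it then holds for every real `u`, and the infimum over `u` of the right-hand side is
`T[f^p]^{1/p} T[g^q]^{1/q}`: it is attained when both `T[f^p]` and `T[g^q]` are positive, and the
degenerate cases follow by adding `ε` to both and letting `ε → 0`.
-/

noncomputable def youngMajorant {V : Type*} [AddCommGroup V] [Module ℝ V] (p q u : ℝ)
    (B C : V) : V :=
  (Real.exp (p * u) / p) • B + (Real.exp (-(q * u)) / q) • C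

section youngMajorant

variable {p q : ℝ}

lemma LinearMap.map_youngMajorant {V W : Type*} [AddCommGroup V] [Module ℝ V] [AddCommGroup W]
    [Module ℝ W] (T : V →ₗ[ℝ] W) (u : ℝ) (B C : V) :
    T (youngMajorant p q u B C) = youngMajorant p q u (T B) (T C) := by
  simp only [youngMajorant, map_add, map_smul]

lemma mul_le_youngMajorant (hpq : p.HolderConjugate q) {a b : ℝ} (ha : 0 ≤ a) (hb : 0 ≤ b)
    (u : ℝ) : a * b ≤ youngMajorant p q u (a ^ p) (b ^ q) := by
  have hu := Real.exp_pos u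
  have hyoung := Real.young_inequality_of_nonneg (mul_nonneg hu.le ha)
    (mul_nonneg (Real.exp_pos (-u)).le hb) hpq
  rw [Real.mul_rpow hu.le ha, Real.mul_rpow (Real.exp_pos _).le hb, ← Real.exp_mul,
    ← Real.exp_mul] at hyoung
  calc a * b = Real.exp u * a * (Real.exp (-u) * b) := by
        rw [Real.exp_neg]; field_simp
    _ ≤ _ := hyoung
    _ = youngMajorant p q u (a ^ p) (b ^ q) := by
        simp only [youngMajorant, smul_eq_mul]; ring_nf

lemma exists_youngMajorant_eq_rpow_mul_rpow (hpq : p.HolderConjugate q) {B C : ℝ} (hB : 0 < B)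
    (hC : 0 < C) : ∃ u, youngMajorant p q u B C = B ^ (1 / p) * C ^ (1 / q) := by
  have hp := hpq.ne_zero
  have hq := hpq.symm.ne_zero
  have hsum : 1 / p + 1 / q = 1 := by simpa [one_div] using hpq.inv_add_inv_eq_one
  set L := Real.log B / p + Real.log C / q with hL
  -- `u` balances the two terms: `e^{(p+q)u} = C / B` with `p + q = p q`.
  refine ⟨(Real.log C - Real.log B) / (p * q), ?_⟩
  have hBterm : Real.exp (p * ((Real.log C - Real.log B) / (p * q))) * B = Real.exp L := by
    rw [← Real.exp_log hB, ← Real.exp_add, Real.log_exp, hL]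
    congr 1
    field_simp
    linear_combination (Real.log B) * hpq.mul_eq_add
  have hCterm : Real.exp (-(q * ((Real.log C - Real.log B) / (p * q)))) * C = Real.exp L := by
    rw [← Real.exp_log hC, ← Real.exp_add, Real.log_exp, hL]
    congr 1
    field_simp
    linear_combination (Real.log C) * hpq.mul_eq_add
  have hrpow : B ^ (1 / p) * C ^ (1 / q) = Real.exp L := by
    rw [Real.rpow_def_of_pos hB, Real.rpow_def_of_pos hC, ← Real.exp_add, hL]
    ring_nf
  simp only [youngMajorant, smul_eq_mul]
  rw [hrpow, div_mul_eq_mul_div, hBterm, div_mul_eq_mul_div, hCterm]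
  linear_combination Real.exp L * hsum

lemma youngMajorant_le_youngMajorant (hp : 0 < p) (hq : 0 < q) (u : ℝ) {B B' C C' : ℝ}
    (hB : B ≤ B') (hC : C ≤ C') : youngMajorant p q u B C ≤ youngMajorant p q u B' C' := by
  simp only [youngMajorant, smul_eq_mul]
  gcongr

lemma le_rpow_mul_rpow_of_forall_le_youngMajorant (hpq : p.HolderConjugate q) {A B C : ℝ}
    (hB : 0 ≤ B) (hC : 0 ≤ C) (h : ∀ u, A ≤ youngMajorant p q u B C) :
    A ≤ B ^ (1 / p) * C ^ (1 / q) := by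
  have hε : ∀ ε > 0, A ≤ (B + ε) ^ (1 / p) * (C + ε) ^ (1 / q) := fun ε hε ↦ by
    obtain ⟨u, hu⟩ := exists_youngMajorant_eq_rpow_mul_rpow hpq
      (by linarith : 0 < B + ε) (by linarith : 0 < C + ε)
    calc A ≤ youngMajorant p q u B C := h u
      _ ≤ youngMajorant p q u (B + ε) (C + ε) :=
        youngMajorant_le_youngMajorant hpq.pos hpq.symm.pos u (by linarith)
          (by linarith)
      _ = _ := hu
  have hcont : Continuous fun ε : ℝ ↦ (B + ε) ^ (1 / p) * (C + ε) ^ (1 / q) :=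
    ((continuous_const.add continuous_id).rpow_const fun _ ↦ Or.inr hpq.one_div_nonneg).mul
      ((continuous_const.add continuous_id).rpow_const fun _ ↦ Or.inr hpq.symm.one_div_nonneg)
  have hlim := (hcont.tendsto 0).mono_left (nhdsWithin_le_nhds (s := Set.Ioi 0))
  simp only [add_zero] at hlim
  exact ge_of_tendsto hlim (eventually_nhdsWithin_of_forall hε)

lemma le_rpow_mul_rpow_of_forall_rat_le_youngMajorant (hpq : p.HolderConjugate q) {A B C : ℝ}
    (hB : 0 ≤ B) (hC : 0 ≤ C) (h : ∀ r : ℚ, A ≤ youngMajorant p q r B C) :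
    A ≤ B ^ (1 / p) * C ^ (1 / q) := by
  refine le_rpow_mul_rpow_of_forall_le_youngMajorant hpq hB hC fun u ↦ ?_
  have hcont : Continuous fun u ↦ youngMajorant p q u B C := by
    simp only [youngMajorant, smul_eq_mul]
    fun_prop
  exact Rat.denseRange_cast.induction_on u (isClosed_le continuous_const hcont) h

end youngMajorant

namespace MeasureTheory

variable {E : Type*} [MeasurableSpace E] {m : Measure E} {r : ENNReal} {p q : ℝ}

lemma Lp.coeFn_youngMajorant (u : ℝ) (F G : Lp ℝ r m) :
    ((youngMajorant p q u F G : Lp ℝ r m) : E → ℝ) =ᵐ[m]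
      fun x ↦ youngMajorant p q u (F x) (G x) := by
  filter_upwards [Lp.coeFn_add ((Real.exp (p * u) / p) • F) ((Real.exp (-(q * u)) / q) • G),
    Lp.coeFn_smul (Real.exp (p * u) / p) F, Lp.coeFn_smul (Real.exp (-(q * u)) / q) G]
    with x hadd hF hG
  simp only [youngMajorant, hadd, Pi.add_apply, hF, hG, Pi.smul_apply]

lemma MemLp.toLp_mul_le_youngMajorant (hpq : p.HolderConjugate q) {f g : E → ℝ}
    (hf0 : ∀ x, 0 ≤ f x) (hg0 : ∀ x, 0 ≤ g x) (hfp : MemLp (fun x ↦ f x ^ p) r m)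
    (hgq : MemLp (fun x ↦ g x ^ q) r m) (hfg : MemLp (fun x ↦ f x * g x) r m) (u : ℝ) :
    hfg.toLp _ ≤ youngMajorant p q u (hfp.toLp _) (hgq.toLp _) := by
  rw [← Lp.coeFn_le]
  filter_upwards [hfg.coeFn_toLp, hfp.coeFn_toLp, hgq.coeFn_toLp,
    Lp.coeFn_youngMajorant u (hfp.toLp _) (hgq.toLp _)] with x hfgx hfpx hgqx hx
  rw [hfgx, hx, hfpx, hgqx]
  exact mul_le_youngMajorant hpq (hf0 x) (hg0 x) u

end MeasureTheory

theorem positivity_preserving_pointwise_holder_general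
    {E : Type*} [MeasurableSpace E] (m : Measure E)
    (T : Lp ℝ 1 m →ₗ[ℝ] Lp ℝ 1 m)
    (hT : ∀ F : Lp ℝ 1 m, 0 ≤ᵐ[m] (F : E → ℝ) → 0 ≤ᵐ[m] (T F : E → ℝ))
    (p q : ℝ) (hp : 1 ≤ p) (hq : 1 ≤ q) (hpq : 1 / p + 1 / q = 1)
    (f g : E → ℝ) (hf0 : ∀ x, 0 ≤ f x) (hg0 : ∀ x, 0 ≤ g x)
    (hfp : MemLp (fun x => f x ^ p) 1 m)
    (hgq : MemLp (fun x => g x ^ q) 1 m)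
    (hfg : MemLp (fun x => f x * g x) 1 m) :
    ∀ᵐ x ∂m,
      (T (hfg.toLp _) : E → ℝ) x ≤
        ((T (hfp.toLp _) : E → ℝ) x) ^ (1 / p) *
          ((T (hgq.toLp _) : E → ℝ) x) ^ (1 / q) := by
  have hpq' : p.HolderConjugate q :=
    ⟨by simpa only [one_div, inv_one] using hpq, by linarith, by linarith⟩
  have hTmono : Monotone T :=
    (monotone_iff_map_nonneg T).2 fun F hF ↦
      (Lp.coeFn_nonneg _).1 (hT F ((Lp.coeFn_nonneg F).2 hF))
  have hTfg (u : ℚ) : ∀ᵐ x ∂m, (T (hfg.toLp _) : E → ℝ) x ≤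
      youngMajorant p q u ((T (hfp.toLp _) : E → ℝ) x) ((T (hgq.toLp _) : E → ℝ) x) := by
    have hle := hTmono (MemLp.toLp_mul_le_youngMajorant hpq' hf0 hg0 hfp hgq hfg u)
    rw [T.map_youngMajorant] at hle
    filter_upwards [(Lp.coeFn_le _ _).2 hle, Lp.coeFn_youngMajorant u _ _] with x hx hx'
    exact hx.trans_eq hx'
  have hTfp : 0 ≤ᵐ[m] (T (hfp.toLp _) : E → ℝ) := hT _ <| by
    filter_upwards [hfp.coeFn_toLp] with x hx
    simpa [hx] using Real.rpow_nonneg (hf0 x) p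
  have hTgq : 0 ≤ᵐ[m] (T (hgq.toLp _) : E → ℝ) := hT _ <| by
    filter_upwards [hgq.coeFn_toLp] with x hx
    simpa [hx] using Real.rpow_nonneg (hg0 x) q
  filter_upwards [ae_all_iff.2 hTfg, hTfp, hTgq] with x hx hBx hCx
  exact le_rpow_mul_rpow_of_forall_rat_le_youngMajorant hpq' hBx hCx hx

/-- Pointwise Hölder inequality for a positivity-preserving linear operator on `L¹`. -/
theorem positivity_preserving_pointwise_holder
    {E : Type*} [MeasurableSpace E] (m : Measure E) [SigmaFinite m]
    (T : Lp ℝ 1 m →ₗ[ℝ] Lp ℝ 1 m)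
    (hT : ∀ F : Lp ℝ 1 m, 0 ≤ᵐ[m] (F : E → ℝ) → 0 ≤ᵐ[m] (T F : E → ℝ))
    (p q : ℝ) (hp : 1 ≤ p) (hq : 1 ≤ q) (hpq : 1 / p + 1 / q = 1)
    (f g : E → ℝ) (hf0 : ∀ x, 0 ≤ f x) (hg0 : ∀ x, 0 ≤ g x)
    (hfp : MemLp (fun x => f x ^ p) 1 m)
    (hgq : MemLp (fun x => g x ^ q) 1 m)
    (hfg : MemLp (fun x => f x * g x) 1 m) :
    ∀ᵐ x ∂m,
      (T (hfg.toLp _) : E → ℝ) x ≤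
        ((T (hfp.toLp _) : E → ℝ) x) ^ (1 / p) *
          ((T (hgq.toLp _) : E → ℝ) x) ^ (1 / q) :=
  positivity_preserving_pointwise_holder_general m T hT p q hp hq hpq f g hf0 hg0 hfp hgq hfg
end

section
/- Let X and Y be finite sets and (a_1, b_1), ..., (a_n, b_n) ∈ X × Y. Define π_X := Σ_{i=1}^n δ_{a_i} on X and π_Y := Σ_{i=1}^n δ_{b_i} on Y. Then the set of nonnegative-integer-valued measures on X × Y with marginals π_X and π_Y is exactly { Σ_{i=1}^n δ_{(a_i, b_{σ(i)})} : σ ∈ S_n }. -/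
open Finset

private lemma key_measures {X Y : Type*} [Fintype X] [Fintype Y] [DecidableEq X] [DecidableEq Y] :
    ∀ (n : ℕ) (a : Fin n → X) (b : Fin n → Y) (ρ : X × Y → ℕ),
      (∀ x, ∑ y : Y, ρ (x, y) = (Finset.univ.filter fun i : Fin n => a i = x).card) →
      (∀ y, ∑ x : X, ρ (x, y) = (Finset.univ.filter fun i : Fin n => b i = y).card) →
      ∃ σ : Equiv.Perm (Fin n),
        ∀ z : X × Y, ρ z = (Finset.univ.filter fun i : Fin n => (a i, b (σ i)) = z).card := by
  intro n
  induction n with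
  | zero =>
    intro a b ρ hX hY
    refine ⟨1, fun z => ?_⟩
    obtain ⟨x, y⟩ := z
    have h := hX x
    have hz : ρ (x, y) = 0 := by
      by_contra hc
      have h1 : 0 < ∑ y : Y, ρ (x, y) :=
        lt_of_lt_of_le (Nat.pos_of_ne_zero hc)
          (Finset.single_le_sum (f := fun y => ρ (x, y)) (fun _ _ => Nat.zero_le _) (mem_univ y))
      rw [h] at h1
      simp at h1
    simp [hz]
  | succ n ih =>
    intro a b ρ hX hY
    -- find y0 with ρ (a 0, y0) > 0
    have hpos : 0 < ∑ y : Y, ρ (a 0, y) := by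
      rw [hX (a 0)]
      exact Finset.card_pos.mpr ⟨0, by simp⟩
    obtain ⟨y0, -, hy0⟩ := Finset.exists_lt_of_sum_lt (by simpa using hpos : ∑ y : Y, (0:ℕ) < ∑ y : Y, ρ (a 0, y))
    -- find j with b j = y0
    have hj : ∃ j : Fin (n+1), b j = y0 := by
      have h1 : 0 < ∑ x : X, ρ (x, y0) :=
        lt_of_lt_of_le hy0 (Finset.single_le_sum (f := fun x => ρ (x, y0)) (fun _ _ => Nat.zero_le _) (mem_univ (a 0)))
      rw [hY y0] at h1
      obtain ⟨j, hj⟩ := Finset.card_pos.mp h1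
      exact ⟨j, by simpa using hj⟩
    obtain ⟨j, hbj⟩ := hj
    set ρ' : X × Y → ℕ := fun z => ρ z - (if z = (a 0, y0) then 1 else 0) with hρ'
    have hsplit : ∀ z, ρ z = ρ' z + (if z = (a 0, y0) then 1 else 0) := by
      intro z
      by_cases h : z = (a 0, y0) <;> simp [hρ', h]
      · subst h; omega
    have hX' : ∀ x, ∑ y : Y, ρ' (x, y) =
        (Finset.univ.filter fun i : Fin n => a i.succ = x).card := by
      intro x
      have h1 := hX x
      rw [Finset.card_filter, Fin.sum_univ_succ] at h1
      have h2 : ∑ y : Y, ρ (x, y) = (∑ y : Y, ρ' (x, y)) + (if x = a 0 then 1 else 0) := by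
        rw [Finset.sum_congr rfl (fun y _ => hsplit (x, y)), Finset.sum_add_distrib]
        congr 1
        by_cases h : x = a 0 <;> simp [Prod.ext_iff, h]
      rw [Finset.card_filter]
      rw [h2] at h1
      have : (if x = a 0 then 1 else 0) = (if a 0 = x then (1:ℕ) else 0) := by
        simp [eq_comm]
      omega
    have hY' : ∀ y, ∑ x : X, ρ' (x, y) =
        (Finset.univ.filter fun i : Fin n => b (j.succAbove i) = y).card := by
      intro y
      have h1 := hY y
      rw [Finset.card_filter, Fin.sum_univ_succAbove _ j] at h1
      have h2 : ∑ x : X, ρ (x, y) = (∑ x : X, ρ' (x, y)) + (if y = y0 then 1 else 0) := by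
        rw [Finset.sum_congr rfl (fun x _ => hsplit (x, y)), Finset.sum_add_distrib]
        congr 1
        by_cases h : y = y0 <;> simp [Prod.ext_iff, h]
      rw [Finset.card_filter]
      rw [h2] at h1
      have : (if y = y0 then 1 else 0) = (if b j = y then (1:ℕ) else 0) := by
        subst hbj; simp [eq_comm]
      omega
    obtain ⟨σ', hσ'⟩ := ih (fun i => a i.succ) (fun i => b (j.succAbove i)) ρ' hX' hY'
    refine ⟨(finSuccEquiv n).trans (σ'.optionCongr.trans (finSuccEquiv' j).symm), fun z => ?_⟩
    rw [Finset.card_filter, Fin.sum_univ_succ]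
    have e0 : ((finSuccEquiv n).trans (σ'.optionCongr.trans (finSuccEquiv' j).symm)) 0 = j := by
      simp
    have es : ∀ i : Fin n,
        ((finSuccEquiv n).trans (σ'.optionCongr.trans (finSuccEquiv' j).symm)) i.succ
          = j.succAbove (σ' i) := by
      intro i; simp
    rw [hsplit z, hσ' z, Finset.card_filter]
    simp only [e0, es, hbj]
    have : (if z = (a 0, y0) then (1:ℕ) else 0) = (if (a 0, y0) = z then 1 else 0) := by
      simp [eq_comm]
    omega

/-- The `ℤ≥0`-valued measures on `X × Y` with marginals `Σ δ_{a_i}` and `Σ δ_{b_i}` are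
exactly the measures `Σ δ_{(a_i, b_{σ(i)})}` for permutations `σ`. -/
theorem measures_with_given_marginals_eq_permuted
    {X Y : Type*} [Fintype X] [Fintype Y] [DecidableEq X] [DecidableEq Y]
    (n : ℕ) (a : Fin n → X) (b : Fin n → Y) :
    {ρ : X × Y → ℕ |
        (∀ x, ∑ y : Y, ρ (x, y) = (Finset.univ.filter fun i : Fin n => a i = x).card) ∧
        (∀ y, ∑ x : X, ρ (x, y) = (Finset.univ.filter fun i : Fin n => b i = y).card)} =
      {ρ : X × Y → ℕ | ∃ σ : Equiv.Perm (Fin n),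
        ∀ z : X × Y, ρ z = (Finset.univ.filter fun i : Fin n => (a i, b (σ i)) = z).card} := by
  ext ρ
  simp only [Set.mem_setOf_eq]
  constructor
  · rintro ⟨hX, hY⟩
    exact key_measures n a b ρ hX hY
  · rintro ⟨σ, hσ⟩
    constructor
    · intro x
      simp only [hσ, Finset.card_filter]
      rw [Finset.sum_comm]
      refine Finset.sum_congr rfl fun i _ => ?_
      by_cases h : a i = x
      · simp [Prod.ext_iff, h]
      · simp [Prod.ext_iff, h]
    · intro y
      simp only [hσ, Finset.card_filter]
      rw [Finset.sum_comm]
      have step : ∀ i : Fin n, ∑ x : X, (if (a i, b (σ i)) = (x, y) then (1:ℕ) else 0)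
          = (if b (σ i) = y then 1 else 0) := by
        intro i
        by_cases h : b (σ i) = y
        · simp [Prod.ext_iff, h]
        · simp [Prod.ext_iff, h]
      rw [Finset.sum_congr rfl fun i _ => step i]
      exact Equiv.sum_comp σ (fun i => if b i = y then (1:ℕ) else 0)
end

section
/- Let X be a finite set, A a nonnegative-integer-valued measure on X² with total mass n = A(X²) < ∞, and fix x_{n+1} ∈ X. Then the number of tuples (x_1, ..., x_n) ∈ X^n satisfying A = Σ_{j=1}^n δ_{(x_j, x_{j+1})} is at most |X| · (∏_{l₁∈X} Ā(l₁)!) / (∏_{l∈X²} A(l)!), where Ā(l₁) := A({l₁} × X). -/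
/-!
A path `p₀, …, pₙ` from `s` with edge measure `A` consists of a first step `(s, w)`, which needs
`A (s, w) ≥ 1`, followed by a path from `w` with edge measure `A - δ_(s,w)`. With
`d v = ∑ w, A (v, w)`, the weight `∏ v, (d v)! / ∏ l, (A l)!` gets multiplied by `A (s, w) / d s`
when the edge `(s, w)` is removed, and these factors sum to `1` over `w`; so by induction on `n`
the weight bounds the number of paths from `s`. Summing over the `|X|` starting points, and
appending `x_{n+1}` to a sequence to get a path, gives the theorem.
-/

open Finset Nat

section

variable {X : Type*}

def edgeMeasure [DecidableEq X] {n : ℕ} (p : Fin (n + 1) → X) (l : X × X) : ℕ :=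
  #{j : Fin n | (p j.castSucc, p j.succ) = l}

def rowSum [Fintype X] (A : X × X → ℕ) (v : X) : ℕ := ∑ w, A (v, w)

def pathsFrom [Fintype X] [DecidableEq X] (n : ℕ) (s : X) (A : X × X → ℕ) :
    Finset (Fin (n + 1) → X) :=
  {p | p 0 = s ∧ edgeMeasure p = A}

theorem prod_factorial_eq_mul_prod_factorial_tsub_single {ι : Type*} [Fintype ι] [DecidableEq ι]
    (f : ι → ℕ) {i : ι} (hi : 0 < f i) :
    ∏ j, (f j)! = f i * ∏ j, ((f - Pi.single i 1 : ι → ℕ) j)! := by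
  rw [← mul_prod_erase _ _ (mem_univ i), ← mul_prod_erase _ _ (mem_univ i), ← mul_assoc,
    Pi.sub_apply, Pi.single_eq_same, mul_factorial_pred hi.ne']
  congr 1
  refine prod_congr rfl fun j hj => ?_
  rw [Pi.sub_apply, Pi.single_eq_of_ne (ne_of_mem_erase hj), Nat.sub_zero]

theorem rowSum_tsub_single [Fintype X] [DecidableEq X] (A : X × X → ℕ) {v w : X}
    (h : 0 < A (v, w)) :
    rowSum (A - Pi.single (v, w) 1) = rowSum A - (Pi.single v 1 : X → ℕ) := by
  funext u
  have hle : ∀ w', (Pi.single (v, w) 1 : X × X → ℕ) (u, w') ≤ A (u, w') := by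
    intro w'
    by_cases h' : (u, w') = (v, w)
    · rw [h', Pi.single_eq_same]; exact h
    · rw [Pi.single_eq_of_ne h']; exact Nat.zero_le _
  simp only [rowSum, Pi.sub_apply]
  rw [sum_tsub_distrib _ fun w' _ => hle w']
  by_cases hu : u = v <;> simp [hu, Pi.single_apply, Prod.ext_iff]

theorem edgeMeasure_eq_edgeMeasure_tail_add_single [DecidableEq X] {n : ℕ}
    (p : Fin (n + 2) → X) :
    edgeMeasure p = edgeMeasure (Fin.tail p) + Pi.single (p 0, p 1) 1 := by
  funext l
  conv_lhs => rw [← Fin.cons_self_tail p]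
  simp only [edgeMeasure, card_filter, Fin.sum_univ_succ, Pi.add_apply, Pi.single_apply,
    eq_comm (a := l)]
  rw [add_comm]
  simp only [Fin.castSucc_succ, Fin.cons_succ, sum_boole, cast_id, Fin.castSucc_zero,
    Fin.cons_zero, Fin.succ_zero_eq_one, Nat.add_left_cancel_iff]
  rfl

theorem edgeMeasure_snoc [DecidableEq X] {n : ℕ} (x : Fin n → X) (xlast : X) (l : X × X) :
    edgeMeasure (Fin.snoc x xlast : Fin (n + 1) → X) l = #{j : Fin n |
      (x j, if h : (j : ℕ) + 1 < n then x ⟨(j : ℕ) + 1, h⟩ else xlast) = l} := by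
  simp only [edgeMeasure, Fin.snoc_castSucc]
  rfl

theorem card_filter_pathsFrom_apply_one_le [Fintype X] [DecidableEq X] {n : ℕ} {s w : X}
    {A : X × X → ℕ} :
    #{p ∈ pathsFrom (n + 1) s A | p 1 = w} ≤ #(pathsFrom n w (A - Pi.single (s, w) 1)) := by
  refine card_le_card_of_injOn Fin.tail ?_ ?_
  · intro p hp
    simp only [pathsFrom, coe_filter, mem_filter, mem_univ, true_and, Set.mem_ofPred_eq] at hp ⊢
    obtain ⟨⟨rfl, rfl⟩, rfl⟩ := hp
    refine ⟨rfl, ?_⟩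
    rw [edgeMeasure_eq_edgeMeasure_tail_add_single p, add_tsub_cancel_right]
  · intro p hp p' hp' h
    simp only [pathsFrom, coe_filter, mem_filter, mem_univ, true_and, Set.mem_ofPred_eq] at hp hp'
    rw [← Fin.cons_self_tail p, ← Fin.cons_self_tail p', hp.1.1, hp'.1.1, h]

theorem card_pathsFrom_zero_mul_prod_factorial_le [Fintype X] [DecidableEq X] (s : X)
    (A : X × X → ℕ) :
    #(pathsFrom 0 s A) * ∏ l, (A l)! ≤ ∏ v, (rowSum A v)! := by
  have hzero : ∀ p : Fin 1 → X, edgeMeasure p = 0 :=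
    fun p => funext fun l => by simp [edgeMeasure]
  obtain rfl | hA := eq_or_ne A 0
  · simp only [rowSum, Pi.zero_apply, sum_const_zero, factorial_zero, prod_const_one, mul_one]
    refine card_le_one.2 fun p hp q hq => ?_
    simp only [pathsFrom, mem_filter] at hp hq
    funext i
    rw [Subsingleton.elim (α := Fin 1) i 0, hp.2.1, hq.2.1]
  · have hempty : pathsFrom 0 s A = ∅ :=
      filter_false_of_mem fun p _ hp => hA (hp.2.symm.trans (hzero p))
    rw [hempty, card_empty, zero_mul]
    exact Nat.zero_le _

theorem card_pathsFrom_mul_prod_factorial_le [Fintype X] [DecidableEq X] (n : ℕ) (s : X)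
    (A : X × X → ℕ) :
    #(pathsFrom n s A) * ∏ l, (A l)! ≤ ∏ v, (rowSum A v)! := by
  induction n generalizing s A with
  | zero => exact card_pathsFrom_zero_mul_prod_factorial_le s A
  | succ n ih =>
    set F := ∏ v, ((rowSum A - Pi.single s 1 : X → ℕ) v)! with hF
    have hfiber : ∀ w, 0 < A (s, w) →
        #{p ∈ pathsFrom (n + 1) s A | p 1 = w} * ∏ l, (A l)! ≤ A (s, w) * F := by
      intro w hw
      set B := A - Pi.single (s, w) 1
      calc _ ≤ #(pathsFrom n w B) * (A (s, w) * ∏ l, (B l)!) := by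
            rw [← prod_factorial_eq_mul_prod_factorial_tsub_single A hw]
            exact Nat.mul_le_mul_right _ card_filter_pathsFrom_apply_one_le
        _ = A (s, w) * (#(pathsFrom n w B) * ∏ l, (B l)!) := by ring
        _ ≤ A (s, w) * F := by
            rw [hF, ← rowSum_tsub_single A hw]
            exact Nat.mul_le_mul_left _ (ih w B)
    have hfirst_step : ∀ p ∈ pathsFrom (n + 1) s A, p 1 ∈ ({w | 0 < A (s, w)} : Finset X) := by
      intro p hp
      simp only [pathsFrom, mem_filter, mem_univ, true_and] at hp ⊢
      rw [← hp.2, ← hp.1, edgeMeasure_eq_edgeMeasure_tail_add_single, Pi.add_apply,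
        Pi.single_eq_same]
      exact Nat.succ_pos _
    calc _ = ∑ w ∈ ({w | 0 < A (s, w)} : Finset X),
          #{p ∈ pathsFrom (n + 1) s A | p 1 = w} * ∏ l, (A l)! := by
          rw [card_eq_sum_card_fiberwise hfirst_step, sum_mul]
      _ ≤ ∑ w ∈ ({w | 0 < A (s, w)} : Finset X), A (s, w) * F :=
          sum_le_sum fun w hw => hfiber w (mem_filter.1 hw).2
      _ = rowSum A s * F := by
          rw [← sum_mul, rowSum, sum_filter_of_ne fun w _ h => Nat.pos_of_ne_zero h]
      _ ≤ ∏ v, (rowSum A v)! := by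
          rcases (rowSum A s).eq_zero_or_pos with h0 | hpos
          · rw [h0, zero_mul]; exact Nat.zero_le _
          · rw [prod_factorial_eq_mul_prod_factorial_tsub_single _ hpos]

theorem card_edgeMeasure_eq_mul_prod_factorial_le [Fintype X] [DecidableEq X] (n : ℕ)
    (A : X × X → ℕ) :
    #{p : Fin (n + 1) → X | edgeMeasure p = A} * ∏ l, (A l)! ≤
      Fintype.card X * ∏ v, (rowSum A v)! := by
  rw [card_eq_sum_card_fiberwise (f := fun p => p 0) (t := univ) fun _ _ => mem_univ _, sum_mul]
  calc _ = ∑ s : X, #(pathsFrom n s A) * ∏ l, (A l)! := by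
        simp only [pathsFrom, filter_filter, and_comm]
    _ ≤ ∑ _s : X, ∏ v, (rowSum A v)! :=
        sum_le_sum fun s _ => card_pathsFrom_mul_prod_factorial_le n s A
    _ = _ := by rw [sum_const, Finset.card_univ, smul_eq_mul]

end

theorem count_sequences_with_edge_measure_le_general
    {X : Type*} [Fintype X] [DecidableEq X] (A : X × X → ℕ) (n : ℕ)
    (xlast : X) :
    ((Finset.univ.filter fun x : Fin n → X =>
        ∀ l : X × X, A l = (Finset.univ.filter fun j : Fin n =>
          (x j, if h : (j : ℕ) + 1 < n then x ⟨(j : ℕ) + 1, h⟩ else xlast) = l).card).card : ℝ) ≤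
      (Fintype.card X : ℝ) *
        (∏ l₁ : X, (Nat.factorial (∑ l₂ : X, A (l₁, l₂)) : ℝ)) /
        (∏ l : X × X, (Nat.factorial (A l) : ℝ)) := by
  have hsnoc : #{x : Fin n → X | ∀ l : X × X, A l = #{j : Fin n |
      (x j, if h : (j : ℕ) + 1 < n then x ⟨(j : ℕ) + 1, h⟩ else xlast) = l}} ≤
      #{p : Fin (n + 1) → X | edgeMeasure p = A} := by
    refine card_le_card_of_injOn (Fin.snoc · xlast) (fun x hx => ?_)
      fun x _ y _ h => (Fin.snoc_injective2 h).1
    simp only [coe_filter, mem_univ, true_and, Set.mem_ofPred_eq] at hx ⊢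
    exact funext fun l => (edgeMeasure_snoc x xlast l).trans (hx l).symm
  have hcount := (Nat.mul_le_mul_right _ hsnoc).trans (card_edgeMeasure_eq_mul_prod_factorial_le n A)
  rw [le_div_iff₀ (by positivity)]
  exact_mod_cast hcount

/-- The number of sequences producing a prescribed edge-count measure `A` on `X²` is at most
`|X| · (∏ Ā(l₁)!) / (∏ A(l)!)`. -/
theorem count_sequences_with_edge_measure_le
    {X : Type*} [Fintype X] [DecidableEq X] (A : X × X → ℕ) (n : ℕ)
    (hn : ∑ l : X × X, A l = n) (xlast : X) :
    ((Finset.univ.filter fun x : Fin n → X =>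
        ∀ l : X × X, A l = (Finset.univ.filter fun j : Fin n =>
          (x j, if h : (j : ℕ) + 1 < n then x ⟨(j : ℕ) + 1, h⟩ else xlast) = l).card).card : ℝ) ≤
      (Fintype.card X : ℝ) *
        (∏ l₁ : X, (Nat.factorial (∑ l₂ : X, A (l₁, l₂)) : ℝ)) /
        (∏ l : X × X, (Nat.factorial (A l) : ℝ)) :=
  count_sequences_with_edge_measure_le_general A n xlast
end

section
/- Suppose p ≥ 2, d_f ≥ 1, d_w ≥ 2 with d_f − p(d_f − d_w) > 0, and c_3 > 0. Then Σ_{n=1}^∞ 2^{−n d_f} ( ∫_0^1 t^{−d_f/d_w} exp{ −c_3 · 2^{−n d_w/(d_w−1)} · t^{−1/(d_w−1)} } dt )^p < ∞. -/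
/-!
The bound `exp (-x) ≤ k ^ k * x ^ (-k)` turns the `t`-integral with parameter
`a = c₃ 2^{-(n+1) d_w/(d_w-1)}` into at most `C a^{-k}`, provided `k / (d_w - 1) > d_f / d_w - 1`
so that the resulting power of `t` is integrable at `0`. The `n`-th term is then
`O(2^{-(n+1)(d_f - p k d_w/(d_w-1))})`, a geometric sequence as soon as `p k d_w/(d_w-1) < d_f`;
the condition `d_f - p (d_f - d_w) > 0` is exactly what leaves room for such a `k > 0`.
-/

open Real MeasureTheory Set Filter Topology

theorem Real.exp_neg_le_rpow_mul_rpow_neg {x k : ℝ} (hx : 0 < x) (hk : 0 < k) :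
    exp (-x) ≤ k ^ k * x ^ (-k) := by
  have hpow : (x / k) ^ k ≤ exp x :=
    calc (x / k) ^ k ≤ exp (x / k) ^ k := by
          gcongr
          linarith [add_one_le_exp (x / k)]
      _ = exp x := by rw [← exp_mul, div_mul_cancel₀ x hk.ne']
  rw [div_rpow hx.le hk.le, div_le_iff₀ (by positivity)] at hpow
  rw [exp_neg, rpow_neg hx.le, ← div_eq_mul_inv, le_div_iff₀ (by positivity)]
  calc (exp x)⁻¹ * x ^ k ≤ (exp x)⁻¹ * (exp x * k ^ k) := by gcongr
    _ = k ^ k := by field_simp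

theorem setIntegral_Ioc_zero_one_rpow {s : ℝ} (hs : -1 < s) :
    ∫ t in Ioc (0 : ℝ) 1, t ^ s = 1 / (s + 1) := by
  rw [← intervalIntegral.integral_of_le zero_le_one, integral_rpow (Or.inl hs),
    one_rpow, zero_rpow (by linarith), sub_zero]

theorem setIntegral_rpow_mul_exp_neg_mul_rpow_le {α β k a : ℝ} (hk : 0 < k) (ha : 0 < a)
    (hint : -1 < k * β - α) :
    ∫ t in Ioc (0 : ℝ) 1, t ^ (-α) * exp (-a * t ^ (-β)) ≤
      k ^ k / (k * β - α + 1) * a ^ (-k) := by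
  have hg : IntegrableOn (fun t : ℝ ↦ k ^ k * a ^ (-k) * t ^ (k * β - α)) (Ioc 0 1) :=
    ((intervalIntegral.intervalIntegrable_rpow' hint).1).const_mul _
  calc ∫ t in Ioc (0 : ℝ) 1, t ^ (-α) * exp (-a * t ^ (-β))
      ≤ ∫ t in Ioc (0 : ℝ) 1, k ^ k * a ^ (-k) * t ^ (k * β - α) := by
        refine setIntegral_mono_of_nonneg (fun t ht ↦ by have := ht.1; positivity)
          (fun t ht ↦ ?_) hg
        have ht : 0 < t := ht.1
        calc t ^ (-α) * exp (-a * t ^ (-β))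
            ≤ t ^ (-α) * (k ^ k * (a * t ^ (-β)) ^ (-k)) := by
              rw [neg_mul]
              gcongr
              exact exp_neg_le_rpow_mul_rpow_neg (by positivity) hk
          _ = k ^ k * a ^ (-k) * t ^ (k * β - α) := by
              rw [mul_rpow ha.le (by positivity), ← rpow_mul ht.le, sub_eq_neg_add,
                rpow_add ht]
              ring_nf
    _ = k ^ k / (k * β - α + 1) * a ^ (-k) := by
        rw [integral_const_mul, setIntegral_Ioc_zero_one_rpow hint]
        ring

theorem summable_two_rpow_neg_succ_mul {ε : ℝ} (hε : 0 < ε) :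
    Summable fun n : ℕ ↦ (2 : ℝ) ^ (-((n : ℝ) + 1) * ε) := by
  have hr : (2 : ℝ) ^ (-ε) < 1 := rpow_lt_one_of_one_lt_of_neg one_lt_two (neg_neg_of_pos hε)
  refine ((summable_geometric_of_lt_one (by positivity) hr).mul_left ((2 : ℝ) ^ (-ε))).congr
    fun n ↦ ?_
  rw [← pow_succ', ← rpow_natCast, ← rpow_mul zero_le_two]
  push_cast
  ring_nf

theorem rpow_mul_pow_le_of_le_mul_rpow_neg {y C k c σ δ r : ℝ} (p : ℕ) (hr : 0 < r)
    (hc : 0 < c) (hy0 : 0 ≤ y) (hy : y ≤ C * (c * r ^ σ) ^ (-k)) :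
    r ^ δ * y ^ p ≤ (C * c ^ (-k)) ^ p * r ^ (δ - p * k * σ) := by
  have hyr : y ≤ C * c ^ (-k) * r ^ (-(k * σ)) := by
    rwa [mul_rpow hc.le (by positivity), ← rpow_mul hr.le, ← mul_assoc, mul_neg,
      mul_comm σ] at hy
  calc r ^ δ * y ^ p ≤ r ^ δ * (C * c ^ (-k) * r ^ (-(k * σ))) ^ p := by gcongr
    _ = (C * c ^ (-k)) ^ p * r ^ (δ - p * k * σ) := by
        rw [mul_pow, ← rpow_natCast (r ^ _), ← rpow_mul hr.le, sub_eq_add_neg, rpow_add hr]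
        ring_nf

theorem summable_two_rpow_mul_pow_of_le_mul_rpow_neg (f : ℝ → ℝ) {C k c σ δ : ℝ} (p : ℕ)
    (hc : 0 < c) (hf0 : ∀ a, 0 < a → 0 ≤ f a) (hf : ∀ a, 0 < a → f a ≤ C * a ^ (-k))
    (hdecay : p * k * σ < δ) :
    Summable fun n : ℕ ↦ (2 : ℝ) ^ (-((n : ℝ) + 1) * δ) *
      f (c * (2 : ℝ) ^ (-((n : ℝ) + 1) * σ)) ^ p := by
  refine .of_nonneg_of_le
    (fun n ↦ mul_nonneg (by positivity) (pow_nonneg (hf0 _ (by positivity)) p)) (fun n ↦ ?_)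
    ((summable_two_rpow_neg_succ_mul (sub_pos.2 hdecay)).mul_left ((C * c ^ (-k)) ^ p))
  have hr : (0 : ℝ) < 2 ^ (-((n : ℝ) + 1)) := by positivity
  have hpos : 0 < c * (2 : ℝ) ^ (-((n : ℝ) + 1) * σ) := by positivity
  simp only [rpow_mul zero_le_two] at hpos ⊢
  exact rpow_mul_pow_le_of_le_mul_rpow_neg p hr hc (hf0 _ hpos) (hf _ hpos)

theorem exists_pos_gt_and_mul_lt {L m D : ℝ} (hm : 0 ≤ m) (hL : m * L < D) (hD : 0 < D) :
    ∃ k, 0 < k ∧ L < k ∧ m * k < D := by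
  have hmax : m * max L 0 < D := by
    rw [mul_max_of_nonneg _ _ hm, mul_zero]
    exact max_lt hL hD
  have hlt : ∀ᶠ k in 𝓝[>] max L 0, m * k < D :=
    nhdsWithin_le_nhds <| (continuous_const.mul continuous_id).continuousAt.eventually_lt
      continuousAt_const hmax
  obtain ⟨k, hk, hkD⟩ := (eventually_mem_nhdsWithin.and hlt).exists
  exact ⟨k, (le_max_right L 0).trans_lt hk, (le_max_left L 0).trans_lt hk, hkD⟩

theorem dyadic_subgaussian_series_summable_general
    (p : ℕ) (df dw c₃ : ℝ) (hdf : 1 ≤ df) (hdw : 2 ≤ dw)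
    (hdim : 0 < df - p * (df - dw)) (hc : 0 < c₃) :
    Summable (fun n : ℕ =>
      (2 : ℝ) ^ (-((n : ℝ) + 1) * df) *
        (∫ t in Set.Ioc (0:ℝ) 1,
            t ^ (-(df / dw)) *
              Real.exp (-c₃ * (2 : ℝ) ^ (-((n : ℝ) + 1) * dw / (dw - 1)) *
                t ^ (-(1 / (dw - 1))))) ^ p) := by
  have hdw1 : 0 < dw - 1 := by linarith
  obtain ⟨k, hk, hkL, hkD⟩ := exists_pos_gt_and_mul_lt (L := (df / dw - 1) * (dw - 1))
    (m := p * (dw / (dw - 1))) (D := df) (by positivity)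
    (by field_simp; linarith) (by linarith)
  have hint : -1 < k * (1 / (dw - 1)) - df / dw := by
    rw [← div_eq_mul_one_div, lt_sub_iff_add_lt, lt_div_iff₀ hdw1]
    linarith
  have hsum := summable_two_rpow_mul_pow_of_le_mul_rpow_neg (σ := dw / (dw - 1)) (δ := df)
    (fun a ↦ ∫ t in Ioc (0 : ℝ) 1, t ^ (-(df / dw)) * exp (-a * t ^ (-(1 / (dw - 1))))) p hc
    (fun a _ ↦ setIntegral_nonneg measurableSet_Ioc fun t ht ↦ by have := ht.1; positivity)
    (fun a ha ↦ setIntegral_rpow_mul_exp_neg_mul_rpow_le hk ha hint) (by linarith)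
  simpa only [neg_mul, neg_div, mul_div_assoc] using hsum

/-- The key convergence estimate for the dyadic decomposition of the `Lᵖ` norm of the
1-order resolvent kernel under sub-Gaussian heat kernel bounds. -/
theorem dyadic_subgaussian_series_summable
    (p : ℕ) (hp : 2 ≤ p) (df dw c₃ : ℝ) (hdf : 1 ≤ df) (hdw : 2 ≤ dw)
    (hdim : 0 < df - p * (df - dw)) (hc : 0 < c₃) :
    Summable (fun n : ℕ =>
      (2 : ℝ) ^ (-((n : ℝ) + 1) * df) *
        (∫ t in Set.Ioc (0:ℝ) 1,
            t ^ (-(df / dw)) *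
              Real.exp (-c₃ * (2 : ℝ) ^ (-((n : ℝ) + 1) * dw / (dw - 1)) *
                t ^ (-(1 / (dw - 1))))) ^ p) :=
  dyadic_subgaussian_series_summable_general p df dw c₃ hdf hdw hdim hc
end

section
/- Let p_t(x,y) be a heat kernel on a metric measure space (E, d, m) with diam(E) = 1 and m(E) < ∞, satisfying p_t(x,y) ≤ c_2 t^{−d_f/d_w} exp{−c_3 (d(x,y)^{d_w}/t)^{1/(d_w−1)}} for t ∈ (0,1], and suppose the volume bounds c_4 r^{d_f} ≤ m(B(x,r)) ≤ c_5 r^{d_f} hold for r ∈ (0,1]. If p ≥ 2 is an integer with d_f − p(d_f − d_w) > 0, then sup_{y∈E} ∫_E R_1(x,y)^p m(dx) < ∞, where R_1(x,y) = ∫_0^∞ e^{−t} p_t(x,y) dt. -/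
/-!
For `t ≤ 1` the sub-Gaussian bound together with `exp (-u) ≤ (q / u) ^ q` gives
`p_t(x,y) ≤ C d(x,y)^(-β) t^((β - d_f) / d_w)`, which is integrable at `t = 0` as soon as
`β > d_f - d_w`; for `t ≥ 1/2` Chapman–Kolmogorov and sub-Markovianity keep `p_t` bounded.
Hence `R₁(x,y) ≤ C d(x,y)^(-β)`. The hypothesis `d_f - p (d_f - d_w) > 0` leaves room for
`β < d_f / p`, and then the layer-cake formula with `m(B(y,r)) ≤ c₅ r^d_f` bounds
`∫ d(x,y)^(-pβ) m(dx)` uniformly in `y`; the diagonal, where the pointwise bound says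
nothing, is `m`-null by the same volume bound.
-/

open MeasureTheory Real Set Metric

lemma exp_neg_le_div_rpow {q u : ℝ} (hq : 0 < q) (hu : 0 < u) : exp (-u) ≤ (q / u) ^ q := by
  have h : u / q ≤ exp (u / q) := by linarith [add_one_le_exp (u / q)]
  calc exp (-u) = (exp (u / q) ^ q)⁻¹ := by
        rw [← exp_mul, div_mul_cancel₀ u hq.ne', exp_neg]
    _ ≤ ((u / q) ^ q)⁻¹ := by gcongr
    _ = (q / u) ^ q := by rw [← inv_rpow (by positivity), inv_div]

lemma exists_exp_neg_mul_rpow_div_le {dw c β : ℝ} (hdw : 1 < dw) (hc : 0 < c) (hβ : 0 < β) :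
    ∃ C, 0 ≤ C ∧ ∀ r t : ℝ, 0 < r → 0 < t →
      exp (-c * (r ^ dw / t) ^ (1 / (dw - 1))) ≤ C * r ^ (-β) * t ^ (β / dw) := by
  -- chosen so that `((r ^ dw / t) ^ (1 / (dw - 1))) ^ (-q) = r ^ (-β) * t ^ (β / dw)`
  set q := β * (dw - 1) / dw
  have hq : 0 < q := div_pos (mul_pos hβ (by linarith)) (by linarith)
  refine ⟨(q / c) ^ q, by positivity, fun r t hr ht => ?_⟩
  have hv : 0 < (r ^ dw / t) ^ (1 / (dw - 1)) := by positivity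
  calc exp (-c * (r ^ dw / t) ^ (1 / (dw - 1)))
      ≤ (q / (c * (r ^ dw / t) ^ (1 / (dw - 1)))) ^ q := by
        rw [neg_mul]; exact exp_neg_le_div_rpow hq (by positivity)
    _ = (q / c) ^ q * ((r ^ dw / t) ^ (1 / (dw - 1))) ^ (-q) := by
        rw [div_mul_eq_div_div, div_rpow (by positivity) hv.le, rpow_neg hv.le, div_eq_mul_inv]
    _ = (q / c) ^ q * r ^ (-β) * t ^ (β / dw) := by
        have hdw0 : dw ≠ 0 := by linarith
        have hdw1 : dw - 1 ≠ 0 := by linarith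
        rw [← rpow_mul (by positivity), div_rpow (by positivity) ht.le, ← rpow_mul hr.le,
          div_eq_mul_inv _ (t ^ _), ← rpow_neg ht.le, mul_assoc]
        congr 3 <;> simp only [q] <;> field_simp

lemma setIntegral_exp_neg_mul_le {f : ℝ → ℝ} {a b K : ℝ} (hb : -1 < b)
    (hf : ∀ t, 0 < t → 0 ≤ f t) (hsmall : ∀ t ∈ Ioc (0 : ℝ) 1, f t ≤ a * t ^ b)
    (hlarge : ∀ t, 1 < t → f t ≤ K) :
    ∫ t in Ioi 0, exp (-t) * f t ≤ a / (b + 1) + K := by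
  have hK : 0 ≤ K := (hf 2 two_pos).trans (hlarge 2 one_lt_two)
  set g : ℝ → ℝ := fun t => (Ioc 0 1).indicator (fun t => a * t ^ b) t + K * exp (-t)
  have hpow : IntegrableOn (fun t : ℝ => a * t ^ b) (Ioc 0 1) :=
    (intervalIntegral.intervalIntegrable_rpow' hb).1.const_mul a
  have hexp : IntegrableOn (fun t : ℝ => K * exp (-t)) (Ioi 0) :=
    (integrableOn_exp_neg_Ioi 0).const_mul K
  have hind : IntegrableOn ((Ioc 0 1).indicator fun t => a * t ^ b) (Ioi 0) :=
    ((integrable_indicator_iff measurableSet_Ioc).2 hpow).integrableOn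
  have hg : IntegrableOn g (Ioi 0) := hind.add hexp
  calc ∫ t in Ioi 0, exp (-t) * f t ≤ ∫ t in Ioi 0, g t := by
        refine integral_mono_of_nonneg ?_ hg ?_ <;>
          filter_upwards [ae_restrict_mem measurableSet_Ioi] with t (ht : 0 < t)
        · exact mul_nonneg (exp_pos _).le (hf t ht)
        · rcases le_or_gt t 1 with h1 | h1
          · simp only [g, indicator_of_mem (show t ∈ Ioc 0 1 from ⟨ht, h1⟩)]
            linarith [mul_le_of_le_one_left (hf t ht) (exp_le_one_iff.2 (neg_nonpos.2 ht.le)),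
              hsmall t ⟨ht, h1⟩, mul_nonneg hK (exp_pos (-t)).le]
          · simp only [g, indicator_of_notMem (show t ∉ Ioc 0 1 from fun h => h1.not_ge h.2),
              zero_add]
            rw [mul_comm]
            exact mul_le_mul_of_nonneg_right (hlarge t h1) (exp_pos _).le
    _ = a / (b + 1) + K := by
        rw [integral_add ?_ hexp, setIntegral_indicator measurableSet_Ioc,
          inter_eq_right.2 Ioc_subset_Ioi_self, integral_const_mul, integral_const_mul,
          integral_exp_neg_Ioi_zero, ← intervalIntegral.integral_of_le zero_le_one,
          integral_rpow (Or.inl hb), one_rpow, zero_rpow (by linarith)]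
        · ring
        · exact hind

lemma integral_mul_le_of_integral_le_one {E : Type*} [MeasurableSpace E] {m : Measure E}
    [IsFiniteMeasure m] {f g : E → ℝ} {B K : ℝ} (hf : Measurable f) (hf0 : 0 ≤ f)
    (hfB : ∀ z, f z ≤ B) (hf1 : ∫ z, f z ∂m ≤ 1) (hg0 : 0 ≤ g) (hgK : ∀ z, g z ≤ K) (hK : 0 ≤ K) :
    ∫ z, f z * g z ∂m ≤ K := by
  have hfi : Integrable f m := .of_bound hf.aestronglyMeasurable B
    (.of_forall fun z => by rw [Real.norm_of_nonneg (hf0 z)]; exact hfB z)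
  calc ∫ z, f z * g z ∂m ≤ ∫ z, f z * K ∂m :=
        integral_mono_of_nonneg (.of_forall fun z => mul_nonneg (hf0 z) (hg0 z))
          (hfi.mul_const K) (.of_forall fun z => mul_le_mul_of_nonneg_left (hgK z) (hf0 z))
    _ = (∫ z, f z ∂m) * K := integral_mul_const K f
    _ ≤ K := mul_le_of_le_one_left hK hf1

lemma kernel_le_of_le_on_Icc {E : Type*} [MeasurableSpace E] {m : Measure E} [IsFiniteMeasure m]
    {pk : ℝ → E → E → ℝ} (hmeas : ∀ t x, Measurable (pk t x))
    (hnonneg : ∀ t : ℝ, 0 < t → ∀ x y, 0 ≤ pk t x y)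
    (hck : ∀ s t : ℝ, 0 < s → 0 < t → ∀ x y, pk (s + t) x y = ∫ z, pk s x z * pk t z y ∂m)
    (hsub : ∀ t : ℝ, 0 < t → ∀ x, ∫ y, pk t x y ∂m ≤ 1) {τ K : ℝ} (hτ : 0 < τ) (hK : 0 ≤ K)
    (hbase : ∀ t ∈ Icc τ (2 * τ), ∀ x y, pk t x y ≤ K) {t : ℝ} (ht : τ ≤ t) (x y : E) :
    pk t x y ≤ K := by
  suffices h : ∀ n : ℕ, ∀ t ∈ Icc τ ((n + 2) * τ), ∀ x y, pk t x y ≤ K by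
    obtain ⟨n, hn⟩ := exists_nat_ge (t / τ)
    refine h n t ⟨ht, ?_⟩ x y
    rw [div_le_iff₀ hτ] at hn
    nlinarith
  intro n
  induction n with
  | zero => simpa using hbase
  | succ n ih =>
    rintro t ⟨hτt, htn⟩ x y
    rcases le_or_gt t (2 * τ) with h2 | h2
    · exact hbase t ⟨hτt, h2⟩ x y
    have hprev : t - τ ∈ Icc τ ((n + 2) * τ) := ⟨by linarith, by push_cast at htn; linarith⟩
    have hpos : 0 < t - τ := by linarith
    rw [← sub_add_cancel t τ, hck _ _ hpos hτ]
    exact integral_mul_le_of_integral_le_one (hmeas _ x) (hnonneg _ hpos x) (ih _ hprev x)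
      (hsub _ hpos x) (fun z => hnonneg τ hτ z y)
      (fun z => hbase τ ⟨le_rfl, by linarith⟩ z y) hK

lemma kernel_le_of_half_le {E : Type*} [PseudoMetricSpace E] [MeasurableSpace E]
    {m : Measure E} [IsFiniteMeasure m] {pk : ℝ → E → E → ℝ} {df dw c₂ c₃ : ℝ}
    (hmeas : ∀ t x, Measurable (pk t x)) (hnonneg : ∀ t : ℝ, 0 < t → ∀ x y, 0 ≤ pk t x y)
    (hck : ∀ s t : ℝ, 0 < s → 0 < t → ∀ x y, pk (s + t) x y = ∫ z, pk s x z * pk t z y ∂m)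
    (hsub : ∀ t : ℝ, 0 < t → ∀ x, ∫ y, pk t x y ∂m ≤ 1) (hα : 0 ≤ df / dw) (hc₂ : 0 ≤ c₂)
    (hc₃ : 0 ≤ c₃) (hupper : ∀ t ∈ Ioc (0 : ℝ) 1, ∀ x y,
      pk t x y ≤ c₂ * t ^ (-(df / dw)) * exp (-c₃ * (dist x y ^ dw / t) ^ (1 / (dw - 1))))
    {t : ℝ} (ht : 1 / 2 ≤ t) (x y : E) :
    pk t x y ≤ c₂ * 2 ^ (df / dw) := by
  refine kernel_le_of_le_on_Icc hmeas hnonneg hck hsub one_half_pos (by positivity)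
    (fun t ⟨ht, ht1⟩ x y => ?_) ht x y
  have ht0 : 0 < t := one_half_pos.trans_le ht
  have hexp : exp (-c₃ * (dist x y ^ dw / t) ^ (1 / (dw - 1))) ≤ 1 :=
    exp_le_one_iff.2 (mul_nonpos_of_nonpos_of_nonneg (neg_nonpos.2 hc₃) (by positivity))
  calc pk t x y ≤ c₂ * t ^ (-(df / dw)) * 1 :=
        (hupper t ⟨ht0, by linarith⟩ x y).trans (by gcongr)
    _ ≤ c₂ * (1 / 2) ^ (-(df / dw)) := by
        rw [mul_one]
        exact mul_le_mul_of_nonneg_left (rpow_le_rpow_of_nonpos one_half_pos ht (neg_nonpos.2 hα))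
          hc₂
    _ = c₂ * 2 ^ (df / dw) := by rw [one_div, inv_rpow zero_le_two, rpow_neg zero_le_two, inv_inv]

lemma exists_resolvent_le_mul_dist_rpow_neg {E : Type*} [PseudoMetricSpace E]
    {pk : ℝ → E → E → ℝ} {df dw c₂ c₃ K β : ℝ} (hdw : 1 < dw) (hc₂ : 0 ≤ c₂) (hc₃ : 0 < c₃)
    (hK : 0 ≤ K) (hβ : 0 < β) (hβd : df - dw < β) (hnonneg : ∀ t : ℝ, 0 < t → ∀ x y, 0 ≤ pk t x y)
    (hupper : ∀ t ∈ Ioc (0 : ℝ) 1, ∀ x y,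
      pk t x y ≤ c₂ * t ^ (-(df / dw)) * exp (-c₃ * (dist x y ^ dw / t) ^ (1 / (dw - 1))))
    (hlarge : ∀ t : ℝ, 1 < t → ∀ x y, pk t x y ≤ K) :
    ∃ C, 0 ≤ C ∧ ∀ x y, 0 < dist x y → dist x y ≤ 1 →
      ∫ t in Ioi 0, exp (-t) * pk t x y ≤ C * dist x y ^ (-β) := by
  obtain ⟨C, hC, hexp⟩ := exists_exp_neg_mul_rpow_div_le hdw hc₃ hβ
  have hb : -1 < β / dw - df / dw := by
    rw [← sub_div, lt_div_iff₀ (by linarith)]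
    linarith
  refine ⟨c₂ * C / (β / dw - df / dw + 1) + K,
    add_nonneg (div_nonneg (mul_nonneg hc₂ hC) (by linarith)) hK, fun x y hr hr1 => ?_⟩
  have hsmall : ∀ t ∈ Ioc (0 : ℝ) 1,
      pk t x y ≤ c₂ * C * dist x y ^ (-β) * t ^ (β / dw - df / dw) := fun t ht =>
    calc pk t x y ≤ c₂ * t ^ (-(df / dw)) * exp (-c₃ * (dist x y ^ dw / t) ^ (1 / (dw - 1))) :=
          hupper t ht x y
      _ ≤ c₂ * t ^ (-(df / dw)) * (C * dist x y ^ (-β) * t ^ (β / dw)) :=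
          mul_le_mul_of_nonneg_left (hexp _ _ hr ht.1)
            (mul_nonneg hc₂ (rpow_nonneg ht.1.le _))
      _ = c₂ * C * dist x y ^ (-β) * t ^ (β / dw - df / dw) := by
          rw [sub_eq_neg_add, rpow_add ht.1]; ring
  have hpow_ge : 1 ≤ dist x y ^ (-β) := one_le_rpow_of_pos_of_le_one_of_nonpos hr hr1 (by linarith)
  calc ∫ t in Ioi 0, exp (-t) * pk t x y
      ≤ c₂ * C * dist x y ^ (-β) / (β / dw - df / dw + 1) + K :=
        setIntegral_exp_neg_mul_le hb (fun t ht => hnonneg t ht x y) hsmall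
          (fun t ht => hlarge t ht x y)
    _ ≤ (c₂ * C / (β / dw - df / dw + 1) + K) * dist x y ^ (-β) := by
        rw [add_mul, mul_div_right_comm]
        gcongr
        exact le_mul_of_one_le_right hK hpow_ge

lemma dist_le_diam_univ {E : Type*} [PseudoMetricSpace E] (h : diam (univ : Set E) ≠ 0)
    (x y : E) : dist x y ≤ diam (univ : Set E) :=
  dist_le_diam_of_mem (not_not.1 (mt diam_eq_zero_of_unbounded h)) (mem_univ x) (mem_univ y)

section VolumeGrowth

variable {E : Type*} [PseudoMetricSpace E] [MeasurableSpace E] {m : Measure E} {y : E} {c d : ℝ}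

lemma measure_singleton_eq_zero_of_ball_le (hd : 0 < d)
    (hvol : ∀ r ∈ Ioc (0 : ℝ) 1, m (ball y r) ≤ ENNReal.ofReal (c * r ^ d)) : m {y} = 0 := by
  have hlim : Filter.Tendsto (fun r : ℝ => ENNReal.ofReal (c * r ^ d)) (nhdsWithin 0 (Ioi 0))
      (nhds 0) := by
    have := ((continuous_rpow_const hd.le).tendsto 0).const_mul c
    rw [zero_rpow hd.ne', mul_zero] at this
    simpa using (ENNReal.tendsto_ofReal this).mono_left nhdsWithin_le_nhds
  refine le_antisymm (ge_of_tendsto hlim ?_) zero_le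
  filter_upwards [Ioc_mem_nhdsGT one_pos] with r hr
  exact (measure_mono (singleton_subset_iff.2 (mem_ball_self hr.1))).trans (hvol r hr)

variable [OpensMeasurableSpace E]

lemma lintegral_dist_rpow_neg_le {γ : ℝ} (hγ : 0 < γ) (hγd : γ < d)
    (hvol : ∀ r ∈ Ioc (0 : ℝ) 1, m (ball y r) ≤ ENNReal.ofReal (c * r ^ d)) :
    ∫⁻ x, ENNReal.ofReal (dist x y ^ (-γ)) ∂m ≤ m univ + ENNReal.ofReal (c * (γ / (d - γ))) := by
  have hexp : -(d / γ) < -1 := by rw [neg_lt_neg_iff, one_lt_div hγ]; exact hγd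
  have hsuper : ∀ t ∈ Ioi (1 : ℝ), {x | t < dist x y ^ (-γ)} ⊆ ball y (t ^ (-γ⁻¹)) := by
    intro t (ht : 1 < t) x (hx : t < dist x y ^ (-γ))
    have hd0 : 0 < dist x y := by
      refine dist_nonneg.lt_of_ne fun h => ?_
      rw [← h, zero_rpow (by linarith)] at hx
      linarith
    have := rpow_lt_rpow_of_neg (by linarith) hx (neg_neg_of_pos (inv_pos.2 hγ))
    rwa [← rpow_mul hd0.le, neg_mul_neg, mul_inv_cancel₀ hγ.ne', rpow_one] at this
  have htail : ∀ t ∈ Ioi (1 : ℝ),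
      m {x | t < dist x y ^ (-γ)} ≤ ENNReal.ofReal (c * t ^ (-(d / γ))) := by
    intro t (ht : 1 < t)
    have hr1 : t ^ (-γ⁻¹) ≤ 1 := rpow_le_one_of_one_le_of_nonpos ht.le (by simpa using hγ.le)
    calc m {x | t < dist x y ^ (-γ)} ≤ m (ball y (t ^ (-γ⁻¹))) := measure_mono (hsuper t ht)
      _ ≤ ENNReal.ofReal (c * (t ^ (-γ⁻¹)) ^ d) := hvol _ ⟨by positivity, hr1⟩
      _ = ENNReal.ofReal (c * t ^ (-(d / γ))) := by
        rw [← rpow_mul (by linarith), neg_mul, inv_mul_eq_div]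
  have hmeas : Measurable fun x => dist x y ^ (-γ) :=
    (continuous_id.dist continuous_const).measurable.pow_const _
  rw [lintegral_eq_lintegral_meas_lt m (.of_forall fun x => by positivity) hmeas.aemeasurable,
    ← Ioc_union_Ioi_eq_Ioi zero_le_one, lintegral_union measurableSet_Ioi Ioc_disjoint_Ioi_same]
  gcongr
  · calc ∫⁻ t in Ioc (0 : ℝ) 1, m {x | t < dist x y ^ (-γ)} ≤ ∫⁻ _ in Ioc (0 : ℝ) 1, m univ :=
          lintegral_mono fun _ => measure_mono (subset_univ _)
      _ = m univ := by simp
  · calc ∫⁻ t in Ioi (1 : ℝ), m {x | t < dist x y ^ (-γ)}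
          ≤ ∫⁻ t in Ioi (1 : ℝ), ENNReal.ofReal (c * t ^ (-(d / γ))) :=
            setLIntegral_mono' measurableSet_Ioi htail
      _ = ENNReal.ofReal c * ∫⁻ t in Ioi (1 : ℝ), ENNReal.ofReal (t ^ (-(d / γ))) := by
        rw [← lintegral_const_mul' _ _ ENNReal.ofReal_ne_top]
        exact setLIntegral_congr_fun measurableSet_Ioi fun t (ht : 1 < t) =>
          ENNReal.ofReal_mul' (by positivity)
      _ = ENNReal.ofReal (c * (γ / (d - γ))) := by
        rw [← ofReal_integral_eq_lintegral_ofReal (integrableOn_Ioi_rpow_of_lt hexp one_pos)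
            (ae_restrict_of_forall_mem measurableSet_Ioi fun t (ht : 1 < t) => by positivity),
          integral_Ioi_rpow_of_lt hexp one_pos, one_rpow, ← neg_div_neg_eq, neg_neg, neg_add,
          neg_neg, ← sub_eq_add_neg, div_sub_one hγ.ne', one_div_div,
          ← ENNReal.ofReal_mul' (div_nonneg hγ.le (by linarith))]

lemma integral_pow_le_of_le_mul_dist_rpow_neg [IsFiniteMeasure m] {F : E → ℝ} {C β : ℝ} {p : ℕ}
    (hp : 0 < p * β) (hpd : p * β < d)
    (hvol : ∀ r ∈ Ioc (0 : ℝ) 1, m (ball y r) ≤ ENNReal.ofReal (c * r ^ d))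
    (hC : 0 ≤ C) (hF0 : ∀ x, 0 ≤ F x) (hF : ∀ᵐ x ∂m, F x ≤ C * dist x y ^ (-β)) :
    ∫ x, F x ^ p ∂m ≤ C ^ p * (m univ + ENNReal.ofReal (c * (p * β / (d - p * β)))).toReal := by
  have hmeas : Measurable fun x => dist x y ^ (-(p * β)) :=
    (continuous_id.dist continuous_const).measurable.pow_const _
  have hlint := lintegral_dist_rpow_neg_le hp hpd hvol
  have hfin : m univ + ENNReal.ofReal (c * (p * β / (d - p * β))) ≠ ⊤ := by finiteness
  have hint : Integrable (fun x => dist x y ^ (-(p * β))) m :=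
    ⟨hmeas.aestronglyMeasurable,
      (hasFiniteIntegral_iff_ofReal (.of_forall fun x => by positivity)).2
        (hlint.trans_lt hfin.lt_top)⟩
  calc ∫ x, F x ^ p ∂m ≤ ∫ x, C ^ p * dist x y ^ (-(p * β)) ∂m := by
        refine integral_mono_of_nonneg (.of_forall fun x => pow_nonneg (hF0 x) p)
          (hint.const_mul _) ?_
        filter_upwards [hF] with x hx
        calc F x ^ p ≤ (C * dist x y ^ (-β)) ^ p := pow_le_pow_left₀ (hF0 x) hx p
          _ = C ^ p * dist x y ^ (-(p * β)) := by
            rw [mul_pow, ← rpow_natCast (_ ^ _), ← rpow_mul dist_nonneg, neg_mul, mul_comm β]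
    _ = C ^ p * ∫ x, dist x y ^ (-(p * β)) ∂m := integral_const_mul _ _
    _ ≤ C ^ p * (m univ + ENNReal.ofReal (c * (p * β / (d - p * β)))).toReal := by
        refine mul_le_mul_of_nonneg_left ?_ (by positivity)
        rw [integral_eq_lintegral_of_nonneg_ae (.of_forall fun x => by positivity)
          hmeas.aestronglyMeasurable]
        exact ENNReal.toReal_mono hfin hlint

end VolumeGrowth

theorem resolvent_kernel_Lp_bound_general
    {E : Type*} [MetricSpace E] [MeasurableSpace E] [BorelSpace E]
    (m : Measure E) [IsFiniteMeasure m]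
    (hdiam : Metric.diam (Set.univ : Set E) = 1)
    (pk : ℝ → E → E → ℝ)
    (hmeas : Measurable fun q : ℝ × E × E => pk q.1 q.2.1 q.2.2)
    (hnonneg : ∀ t : ℝ, 0 < t → ∀ x y, 0 ≤ pk t x y)
    (hck : ∀ s t : ℝ, 0 < s → 0 < t → ∀ x y,
      pk (s + t) x y = ∫ z, pk s x z * pk t z y ∂m)
    (hsub : ∀ t : ℝ, 0 < t → ∀ x, ∫ y, pk t x y ∂m ≤ 1)
    (df dw c₂ c₃ c₄ c₅ : ℝ) (hdf : 1 ≤ df) (hdw : 2 ≤ dw)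
    (hc₂ : 0 < c₂) (hc₃ : 0 < c₃)
    (hupper : ∀ t ∈ Set.Ioc (0:ℝ) 1, ∀ x y,
      pk t x y ≤ c₂ * t ^ (-(df / dw)) *
        Real.exp (-c₃ * (dist x y ^ dw / t) ^ (1 / (dw - 1))))
    (hvol : ∀ x : E, ∀ r ∈ Set.Ioc (0:ℝ) 1,
      c₄ * r ^ df ≤ (m (Metric.ball x r)).toReal ∧
        (m (Metric.ball x r)).toReal ≤ c₅ * r ^ df)
    (p : ℕ) (hp : 2 ≤ p) (hdim : 0 < df - p * (df - dw)) :
    ∃ M : ℝ, ∀ y : E,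
      ∫ x, (∫ t in Set.Ioi (0:ℝ), Real.exp (-t) * pk t x y) ^ p ∂m ≤ M := by
  have hvol' : ∀ y, ∀ r ∈ Ioc (0 : ℝ) 1, m (ball y r) ≤ ENNReal.ofReal (c₅ * r ^ df) :=
    fun y r hr => (ENNReal.ofReal_toReal (measure_ne_top _ _)).symm.trans_le
      (ENNReal.ofReal_le_ofReal (hvol y r hr).2)
  have hdist (x y : E) : dist x y ≤ 1 := hdiam ▸ dist_le_diam_univ (by simp [hdiam]) x y
  have hlarge (t : ℝ) (ht : 1 < t) (x y : E) : pk t x y ≤ c₂ * 2 ^ (df / dw) :=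
    kernel_le_of_half_le
      (fun t x => hmeas.comp (measurable_const.prodMk (measurable_const.prodMk measurable_id)))
      hnonneg hck hsub (div_nonneg (by linarith) (by linarith)) hc₂.le hc₃.le hupper
      (by linarith) x y
  have hp0 : (0 : ℝ) < p := by exact_mod_cast (two_pos.trans_le hp)
  obtain ⟨β, hβ, hβp⟩ := exists_between (show max (df - dw) 0 < df / p from
    max_lt (by rw [lt_div_iff₀ hp0]; linarith) (by positivity))
  obtain ⟨C, hC, hR⟩ := exists_resolvent_le_mul_dist_rpow_neg (by linarith) hc₂.le hc₃
    (by positivity) ((le_max_right _ _).trans_lt hβ) ((le_max_left _ _).trans_lt hβ) hnonneg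
    hupper hlarge
  refine ⟨C ^ p * (m univ + ENNReal.ofReal (c₅ * (p * β / (df - p * β)))).toReal, fun y => ?_⟩
  refine integral_pow_le_of_le_mul_dist_rpow_neg
    (mul_pos hp0 ((le_max_right _ _).trans_lt hβ)) ((lt_div_iff₀' hp0).1 hβp) (hvol' y) hC
    (fun x => setIntegral_nonneg measurableSet_Ioi fun t ht =>
      mul_nonneg (exp_pos _).le (hnonneg t ht x y)) ?_
  filter_upwards [measure_eq_zero_iff_ae_notMem.1
    (measure_singleton_eq_zero_of_ball_le (by linarith) (hvol' y))] with x hx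
  exact hR x y (dist_pos.2 hx) (hdist x y)

/-- Under sub-Gaussian heat kernel upper bounds and Ahlfors-type volume bounds with
`d_f − p(d_f − d_w) > 0`, the 1-order resolvent kernel lies in `Lᵖ` uniformly:
`sup_y ∫ R₁(x,y)^p m(dx) < ∞`. -/
theorem resolvent_kernel_Lp_bound
    {E : Type*} [MetricSpace E] [MeasurableSpace E] [BorelSpace E]
    (m : Measure E) [IsFiniteMeasure m]
    (hdiam : Metric.diam (Set.univ : Set E) = 1)
    (pk : ℝ → E → E → ℝ)
    (hmeas : Measurable fun q : ℝ × E × E => pk q.1 q.2.1 q.2.2)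
    (hnonneg : ∀ t : ℝ, 0 < t → ∀ x y, 0 ≤ pk t x y)
    (hsymm : ∀ t : ℝ, 0 < t → ∀ x y, pk t x y = pk t y x)
    (hck : ∀ s t : ℝ, 0 < s → 0 < t → ∀ x y,
      pk (s + t) x y = ∫ z, pk s x z * pk t z y ∂m)
    (hsub : ∀ t : ℝ, 0 < t → ∀ x, ∫ y, pk t x y ∂m ≤ 1)
    (df dw c₂ c₃ c₄ c₅ : ℝ) (hdf : 1 ≤ df) (hdw : 2 ≤ dw)
    (hc₂ : 0 < c₂) (hc₃ : 0 < c₃) (hc₄ : 0 < c₄) (hc₅ : 0 < c₅)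
    (hupper : ∀ t ∈ Set.Ioc (0:ℝ) 1, ∀ x y,
      pk t x y ≤ c₂ * t ^ (-(df / dw)) *
        Real.exp (-c₃ * (dist x y ^ dw / t) ^ (1 / (dw - 1))))
    (hvol : ∀ x : E, ∀ r ∈ Set.Ioc (0:ℝ) 1,
      c₄ * r ^ df ≤ (m (Metric.ball x r)).toReal ∧
        (m (Metric.ball x r)).toReal ≤ c₅ * r ^ df)
    (p : ℕ) (hp : 2 ≤ p) (hdim : 0 < df - p * (df - dw)) :
    ∃ M : ℝ, ∀ y : E,
      ∫ x, (∫ t in Set.Ioi (0:ℝ), Real.exp (-t) * pk t x y) ^ p ∂m ≤ M :=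
  resolvent_kernel_Lp_bound_general m hdiam pk hmeas hnonneg hck hsub df dw c₂ c₃ c₄ c₅ hdf hdw hc₂
    hc₃ hupper hvol p hp hdim
end

section
/- Let X be a finite set, p ≥ 1, S* a finite index set partitioned into S*_1 and S*_2, and for each i let F_i' be a set with |F_i'| = |S*|. Fix elements a_j^{(i)} ∈ X for j in an ambient index set. Let A and r be Z_{≥0}-valued measures on X^p with total masses |S*| and |S*_1| respectively and r ≤ A pointwise. Define Ψ_p(A, r, a) as the set of p-tuples of bijections σ_i : S* → F_i' such that A = Σ_{j∈S*} δ_{(a^{(1)}_{σ_1(j)},...,a^{(p)}_{σ_p(j)})} and r = Σ_{j∈S*_1} δ_{(a^{(1)}_{σ_1(j)},...,a^{(p)}_{σ_p(j)})}. If Ψ_p(A, r, a) is nonempty, then |Ψ_p(A, r, a)| = |S*_1|! · |S*_2|! · (∏_{i=1}^p ∏_{x∈X} A_i(x)!) / (∏_{x∈X^p} A(x)!) · ∏_{x∈X^p} C(A(x), r(x)), where A_i is the i-th marginal of A. -/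
/-!
The group `∏ᵢ {πᵢ : Perm (F i) // aᵢ ∘ πᵢ = aᵢ} × {τ : Perm S* // τ preserves S₁}` acts on tuples
of bijections by `σᵢ ↦ πᵢ ∘ σᵢ ∘ τ`. Label `j ∈ S*` by its pattern `((aᵢ (σᵢ j))ᵢ, j ∈ S₁)`:
`σ ∈ Ψ` says exactly that every pattern value occurs as often as for a fixed `σ₀ ∈ Ψ`, so `Ψ` is
the orbit of `σ₀`, and the group elements sending `σ₀` to `σ` correspond to the permutations
`τ` of `S*` carrying the pattern of `σ₀` to that of `σ`, of which there are
`∏ₓ r(x)! (A(x) - r(x))!`. Counting the group in two ways gives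
`|Ψ| ∏ₓ r(x)! (A(x) - r(x))! = |S₁|! |S₂|! ∏ᵢ ∏_y Aᵢ(y)!`, and `A! = C(A, r) r! (A - r)!`.
-/

open Equiv Finset Nat

theorem card_perm_comp_eq_of_card_fiber_eq {α Y : Type*} [Finite α] [Fintype Y] {f g : α → Y}
    (h : ∀ y, Nat.card {x // f x = y} = Nat.card {x // g x = y}) :
    Nat.card {τ : Perm α // f ∘ τ = g} = ∏ y, (Nat.card {x // f x = y})! := by
  have he : ∀ y, Nonempty ({x // g x = y} ≃ {x // f x = y}) :=
    fun y => Finite.card_eq.mp (h y).symm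
  let τ₀ : Perm α := ofFiberEquiv fun y => (he y).some
  have hτ₀ : f ∘ τ₀ = g := funext (ofFiberEquiv_map _)
  -- the solutions of `f ∘ τ = g` form the coset `Stab(f) * τ₀`
  calc Nat.card {τ : Perm α // f ∘ τ = g}
      = Nat.card {τ : Perm α // f ∘ τ = f} :=
        Nat.card_congr <| subtypeEquiv (Equiv.mulRight τ₀⁻¹) fun τ => by
          rw [coe_mulRight, Perm.coe_mul, Perm.coe_inv, ← Function.comp_assoc, comp_symm_eq,
            hτ₀]
    _ = _ := DomMulAct.stabilizer_ncard f

theorem card_filter_apply_eq_sum {S ι X : Type*} [Fintype S] [Fintype ι] [DecidableEq ι]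
    [Fintype X] [DecidableEq X] (g : S → ι → X) (i : ι) (y : X) :
    #{j | g j i = y} = ∑ x, if x i = y then #{j | g j = x} else 0 := by
  rw [← sum_filter, sum_card_fiberwise_eq_card_filter]
  simp

theorem prod_factorial_card_mem {S : Type*} [Fintype S] [DecidableEq S] (S₁ : Finset S) :
    ∏ l, (Nat.card {j // decide (j ∈ S₁) = l})! = (#S₁)! * (#S₁ᶜ)! := by
  simp [Nat.card_eq_fintype_card, Fintype.card_subtype, ← compl_filter]

theorem cast_eq_div_mul_prod_choose {κ : Type*} [Fintype κ] {A r : κ → ℕ}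
    (hrA : ∀ x, r x ≤ A x) {n M : ℕ} (h : n * ∏ x, (r x)! * (A x - r x)! = M) :
    (n : ℝ) = M / (∏ x, ((A x)! : ℝ)) * ∏ x, ((A x).choose (r x) : ℝ) := by
  have hfac : ∀ x, ((A x)! : ℝ) = (A x).choose (r x) * ((r x)! * (A x - r x)!) := fun x => by
    rw [← Nat.choose_mul_factorial_mul_factorial (hrA x)]
    push_cast
    ring
  have hchoose : ∏ x, ((A x).choose (r x) : ℝ) ≠ 0 :=
    prod_ne_zero_iff.mpr fun x _ => by exact_mod_cast (Nat.choose_pos (hrA x)).ne'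
  simp only [hfac, prod_mul_distrib, ← h]
  push_cast
  field_simp

namespace BijectionTuple

variable {ι S X L : Type*} {F : ι → Type*}

def pattern (a : ∀ i, F i → X) (ℓ : S → L) (σ : ∀ i, S ≃ F i) (j : S) : (ι → X) × L :=
  (fun i => a i (σ i j), ℓ j)

def relabel (π : ∀ i, Perm (F i)) (τ : Perm S) (σ : ∀ i, S ≃ F i) : ∀ i, S ≃ F i :=
  fun i => τ.trans ((σ i).trans (π i))

def patternClass (a : ∀ i, F i → X) (ℓ : S → L) (σ₀ : ∀ i, S ≃ F i) : Set (∀ i, S ≃ F i) :=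
  {σ | ∀ z, Nat.card {j // pattern a ℓ σ j = z} = Nat.card {j // pattern a ℓ σ₀ j = z}}

variable {a : ∀ i, F i → X} {ℓ : S → L}

theorem pattern_relabel {π : ∀ i, Perm (F i)} (hπ : ∀ i, a i ∘ π i = a i) {τ : Perm S}
    (hτ : ℓ ∘ τ = ℓ) (σ : ∀ i, S ≃ F i) :
    pattern a ℓ (relabel π τ σ) = pattern a ℓ σ ∘ τ := by
  funext j
  exact Prod.ext (funext fun i => congrFun (hπ i) _) (congrFun hτ j).symm

theorem relabel_mem_patternClass {π : ∀ i, Perm (F i)} (hπ : ∀ i, a i ∘ π i = a i)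
    {τ : Perm S} (hτ : ℓ ∘ τ = ℓ) (σ₀ : ∀ i, S ≃ F i) :
    relabel π τ σ₀ ∈ patternClass a ℓ σ₀ := fun z => by
  rw [pattern_relabel hπ hτ]
  exact Nat.card_congr (τ.subtypeEquiv fun _ => Iff.rfl)

def relabelEquiv (σ₀ : ∀ i, S ≃ F i) :
    (∀ i, {π : Perm (F i) // a i ∘ π = a i}) × {τ : Perm S // ℓ ∘ τ = ℓ} ≃
      Σ σ : patternClass a ℓ σ₀, {τ : Perm S // pattern a ℓ σ₀ ∘ τ = pattern a ℓ σ} where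
  toFun g :=
    ⟨⟨_, relabel_mem_patternClass (fun i => (g.1 i).2) g.2.2 σ₀⟩,
      g.2.1, (pattern_relabel (fun i => (g.1 i).2) g.2.2 σ₀).symm⟩
  invFun s :=
    (fun i => ⟨(σ₀ i).symm.trans (s.2.1.symm.trans (s.1.1 i)), funext fun z => by
        simpa [pattern] using
          congrArg (fun w => w.1 i) (congrFun s.2.2 (s.2.1.symm ((σ₀ i).symm z))).symm⟩,
      ⟨s.2.1, funext fun j => congrArg Prod.snd (congrFun s.2.2 j)⟩)
  left_inv g := Prod.ext (funext fun i => Subtype.ext (Equiv.ext fun z => by simp [relabel])) rfl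
  right_inv s := Sigma.subtype_ext (Subtype.ext (funext fun i => Equiv.ext fun j => by
    simp [relabel])) rfl

theorem ncard_patternClass_mul [Fintype ι] [DecidableEq ι] [Finite S] [∀ i, Finite (F i)]
    [Fintype X] [Fintype L] (σ₀ : ∀ i, S ≃ F i) :
    (patternClass a ℓ σ₀).ncard * ∏ z, (Nat.card {j // pattern a ℓ σ₀ j = z})! =
      (∏ i, ∏ x, (Nat.card {f // a i f = x})!) * ∏ l, (Nat.card {j // ℓ j = l})! := by
  have : Fintype (patternClass a ℓ σ₀) := Fintype.ofFinite _
  calc _ = Nat.card (Σ σ : patternClass a ℓ σ₀,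
        {τ : Perm S // pattern a ℓ σ₀ ∘ τ = pattern a ℓ σ}) := by
        rw [Nat.card_sigma, Finset.sum_congr rfl fun σ _ =>
          card_perm_comp_eq_of_card_fiber_eq fun z => (σ.2 z).symm, sum_const, Finset.card_univ,
          smul_eq_mul, ← Nat.card_eq_fintype_card, Nat.card_coe_set_eq]
    _ = _ := (Nat.card_congr (relabelEquiv σ₀)).symm
    _ = _ := by
        simp only [Nat.card_prod, Nat.card_pi, card_perm_comp_eq_of_card_fiber_eq fun _ => rfl]

section Realizing

variable [Fintype ι] [Fintype S] [DecidableEq X]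

/-- `Ψ_p(A, r, a)`. -/
def bijectionTuples (A r : (ι → X) → ℕ) (S₁ : Finset S) (a : ∀ i, F i → X) :
    Set (∀ i, S ≃ F i) :=
  {σ | (∀ x, A x = #{j | (fun i => a i (σ i j)) = x}) ∧
    (∀ x, r x = #{j ∈ S₁ | (fun i => a i (σ i j)) = x})}

variable {A r : (ι → X) → ℕ} {S₁ : Finset S} {σ₀ : ∀ i, S ≃ F i}

theorem card_fiber_eq_sum [DecidableEq ι] [Fintype X] (h₀ : σ₀ ∈ bijectionTuples A r S₁ a)
    (i : ι) (y : X) :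
    Nat.card {f : F i // a i f = y} = ∑ x : ι → X, if x i = y then A x else 0 := by
  rw [← Nat.card_congr ((σ₀ i).subtypeEquiv fun _ => Iff.rfl), Nat.card_eq_fintype_card,
    Fintype.card_subtype, card_filter_apply_eq_sum fun j i => a i (σ₀ i j)]
  simp only [← h₀.1]

variable [DecidableEq S]

theorem card_pattern_true (σ : ∀ i, S ≃ F i) (x : ι → X) :
    Nat.card {j // pattern a (fun j => decide (j ∈ S₁)) σ j = (x, true)} =
      #{j ∈ S₁ | (fun i => a i (σ i j)) = x} := by
  rw [Nat.card_eq_fintype_card, Fintype.card_subtype]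
  congr 1
  ext j
  simp [pattern, and_comm]

theorem card_pattern_true_add_false (σ : ∀ i, S ≃ F i) (x : ι → X) :
    Nat.card {j // pattern a (fun j => decide (j ∈ S₁)) σ j = (x, true)} +
      Nat.card {j // pattern a (fun j => decide (j ∈ S₁)) σ j = (x, false)} =
      #{j | (fun i => a i (σ i j)) = x} := by
  simp only [Nat.card_eq_fintype_card, Fintype.card_subtype]
  rw [← card_filter_add_card_filter_not (s := {j | (fun i => a i (σ i j)) = x}) (· ∈ S₁)]
  congr 1 <;> congr 1 <;> ext j <;> simp [pattern, and_comm]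

theorem bijectionTuples_eq_patternClass (h₀ : σ₀ ∈ bijectionTuples A r S₁ a) :
    bijectionTuples A r S₁ a = patternClass a (fun j => decide (j ∈ S₁)) σ₀ := by
  ext σ
  constructor
  · rintro ⟨hA, hr⟩ ⟨x, b⟩
    have h := card_pattern_true_add_false (a := a) (S₁ := S₁) σ x
    have h₀' := card_pattern_true_add_false (a := a) (S₁ := S₁) σ₀ x
    rw [card_pattern_true, ← hr, ← hA] at h
    rw [card_pattern_true, ← h₀.2, ← h₀.1] at h₀'
    cases b
    · omega
    · rw [card_pattern_true, card_pattern_true, ← hr, ← h₀.2]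
  · intro h
    refine ⟨fun x => ?_, fun x => ?_⟩
    · rw [h₀.1 x, ← card_pattern_true_add_false, ← card_pattern_true_add_false, h, h]
    · rw [h₀.2 x, ← card_pattern_true, ← card_pattern_true, h]

theorem prod_factorial_card_pattern [DecidableEq ι] [Fintype X]
    (h₀ : σ₀ ∈ bijectionTuples A r S₁ a) :
    ∏ z, (Nat.card {j // pattern a (fun j => decide (j ∈ S₁)) σ₀ j = z})! =
      ∏ x, (r x)! * (A x - r x)! := by
  rw [Fintype.prod_prod_type]
  refine prod_congr rfl fun x _ => ?_
  have h := card_pattern_true_add_false (a := a) (S₁ := S₁) σ₀ x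
  rw [card_pattern_true, ← h₀.2, ← h₀.1] at h
  rw [Fintype.prod_bool, card_pattern_true, ← h₀.2, show
    Nat.card {j // pattern a (fun j => decide (j ∈ S₁)) σ₀ j = (x, false)} = A x - r x by omega]

end Realizing

end BijectionTuple

theorem count_bijection_tuples_general
    {X : Type*} [Fintype X] [DecidableEq X]
    (p : ℕ)
    (Sstar : Type*) [Fintype Sstar] [DecidableEq Sstar]
    (S₁ : Finset Sstar)
    (F : Fin p → Type*) [∀ i, Fintype (F i)]
    (a : ∀ i : Fin p, F i → X)
    (A r : (Fin p → X) → ℕ)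
    (hrA : ∀ x, r x ≤ A x)
    (hne : {σ : ∀ i, Sstar ≃ F i |
        (∀ x, A x = (Finset.univ.filter fun j : Sstar =>
          (fun i => a i (σ i j)) = x).card) ∧
        (∀ x, r x = (S₁.filter fun j : Sstar =>
          (fun i => a i (σ i j)) = x).card)}.Nonempty) :
    (({σ : ∀ i, Sstar ≃ F i |
        (∀ x, A x = (Finset.univ.filter fun j : Sstar =>
          (fun i => a i (σ i j)) = x).card) ∧
        (∀ x, r x = (S₁.filter fun j : Sstar =>
          (fun i => a i (σ i j)) = x).card)}.ncard : ℝ) =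
      (Nat.factorial S₁.card : ℝ) * (Nat.factorial S₁ᶜ.card : ℝ) *
        (∏ i : Fin p, ∏ y : X,
          (Nat.factorial (∑ x : Fin p → X, if x i = y then A x else 0) : ℝ)) /
        (∏ x : Fin p → X, (Nat.factorial (A x) : ℝ)) *
        ∏ x : Fin p → X, (Nat.choose (A x) (r x) : ℝ)) := by
  obtain ⟨σ₀, h₀⟩ := hne
  have key := BijectionTuple.ncard_patternClass_mul (a := a) (ℓ := fun j => decide (j ∈ S₁)) σ₀
  rw [← BijectionTuple.bijectionTuples_eq_patternClass h₀,
    BijectionTuple.prod_factorial_card_pattern h₀, prod_factorial_card_mem] at key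
  simp only [BijectionTuple.card_fiber_eq_sum h₀] at key
  change ((BijectionTuple.bijectionTuples A r S₁ a).ncard : ℝ) = _
  rw [cast_eq_div_mul_prod_choose hrA key]
  push_cast
  ring

/-- Counting lemma for tuples of bijections reproducing prescribed measures `A` and `r`
(the core combinatorial ingredient of the exponential approximation). -/
theorem count_bijection_tuples
    {X : Type*} [Fintype X] [DecidableEq X]
    (p : ℕ) (hp : 1 ≤ p)
    (Sstar : Type*) [Fintype Sstar] [DecidableEq Sstar]
    (S₁ : Finset Sstar)
    (F : Fin p → Type*) [∀ i, Fintype (F i)] [∀ i, DecidableEq (F i)]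
    (hcard : ∀ i, Fintype.card (F i) = Fintype.card Sstar)
    (a : ∀ i : Fin p, F i → X)
    (A r : (Fin p → X) → ℕ)
    (hA : ∑ x : Fin p → X, A x = Fintype.card Sstar)
    (hr : ∑ x : Fin p → X, r x = S₁.card)
    (hrA : ∀ x, r x ≤ A x)
    (hne : {σ : ∀ i, Sstar ≃ F i |
        (∀ x, A x = (Finset.univ.filter fun j : Sstar =>
          (fun i => a i (σ i j)) = x).card) ∧
        (∀ x, r x = (S₁.filter fun j : Sstar =>
          (fun i => a i (σ i j)) = x).card)}.Nonempty) :
    (({σ : ∀ i, Sstar ≃ F i |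
        (∀ x, A x = (Finset.univ.filter fun j : Sstar =>
          (fun i => a i (σ i j)) = x).card) ∧
        (∀ x, r x = (S₁.filter fun j : Sstar =>
          (fun i => a i (σ i j)) = x).card)}.ncard : ℝ) =
      (Nat.factorial S₁.card : ℝ) * (Nat.factorial S₁ᶜ.card : ℝ) *
        (∏ i : Fin p, ∏ y : X,
          (Nat.factorial (∑ x : Fin p → X, if x i = y then A x else 0) : ℝ)) /
        (∏ x : Fin p → X, (Nat.factorial (A x) : ℝ)) *
        ∏ x : Fin p → X, (Nat.choose (A x) (r x) : ℝ)) :=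
  count_bijection_tuples_general p Sstar S₁ F a A r hrA hne
end
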